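/- Complementary determinacy: For every hybrid game α and every set of states X ⊆ S, if Angel and Demon have complementary goals then the game is determined: (ς_α(X, Xᶜ))ᶜ = δ_α(X, Xᶜ), i.e., a state lies in Demon's semi-competitive winning region for goals (X, Xᶜ) if and only if it does not lie in Angel's. -/
import Mathlib


open Set

/-- Hybrid games over a variable set `V`. Terms/ODE right-hand sides are
interpreted as functions from states `V → ℝ` to `ℝ`; tests and evolution
domain constraints are sets of states. -/
inductive Game (V : Type*) where
  | assign (x : V) (e : (V → ℝ) → ℝ)
  | ode (x : V) (f : (V → ℝ) → ℝ) (Q : Set (V → ℝ))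
  | test (Q : Set (V → ℝ))
  | choice (a b : Game V)
  | seq (a b : Game V)
  | dual (a : Game V)
  | star (a : Game V)

variable {V : Type*} [DecidableEq V]

/-- `φ : ℝ → (V → ℝ)` (restricted to `[0,r]`) is a solution of `x' = f(x) & Q`
of duration `r ≥ 0`: `t ↦ φ t x` is differentiable with derivative `f (φ s)`
at each `s ∈ [0,r]`, `φ s ∈ Q` on `[0,r]`, and all other variables stay
constant along `φ`. -/
def IsSolution (x : V) (f : (V → ℝ) → ℝ) (Q : Set (V → ℝ)) (r : ℝ)
    (φ : ℝ → (V → ℝ)) : Prop :=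
  0 ≤ r ∧
  (∀ s ∈ Set.Icc 0 r, HasDerivAt (fun t => φ t x) (f (φ s)) s) ∧
  (∀ s ∈ Set.Icc 0 r, φ s ∈ Q) ∧
  (∀ s ∈ Set.Icc 0 r, ∀ y, y ≠ x → φ s y = φ 0 y)

mutual
/-- Angel's semi-competitive winning region ς_α(X,Y). -/
def angel : Game V → Set (V → ℝ) → Set (V → ℝ) → Set (V → ℝ)
  | .assign x e, X, _ => {ω | Function.update ω x (e ω) ∈ X}
  | .ode x f Q, X, _ =>
      {ω | ∃ r φ, IsSolution x f Q r φ ∧ φ 0 = ω ∧ φ r ∈ X}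
  | .test Q, X, _ => Q ∩ X
  | .choice a b, X, Y => angel a X Y ∪ angel b X Y
  | .seq a b, X, Y => angel a (angel b X Y) (demon b X Y)
  | .dual a, X, Y => demon a Y X
  | .star a, X, Y =>
      ⋂₀ {Z | X ∪ angel a Z Zᶜ ⊆ Z} ∪
      ⋂₀ {Z | (X ∩ Y) ∪ (angel a Z Z ∩ demon a Z Z) ⊆ Z}

/-- Demon's semi-competitive winning region δ_α(X,Y). -/
def demon : Game V → Set (V → ℝ) → Set (V → ℝ) → Set (V → ℝ)
  | .assign x e, _, Y => {ω | Function.update ω x (e ω) ∈ Y}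
  | .ode x f Q, X, Y =>
      {ω | ∀ r φ, IsSolution x f Q r φ → φ 0 = ω → ∀ s ∈ Set.Icc 0 r, φ s ∈ Y} ∪
      {ω | ∃ r φ, IsSolution x f Q r φ ∧ φ 0 = ω ∧ ∃ s ∈ Set.Icc 0 r, φ s ∈ X ∩ Y}
  | .test Q, _, Y => Qᶜ ∪ Y
  | .choice a b, X, Y =>
      (demon a X Y ∩ demon b X Y) ∪ (demon a X Y ∩ angel a X Y) ∪
      (demon b X Y ∩ angel b X Y)
  | .seq a b, X, Y => demon a (angel b X Y) (demon b X Y)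
  | .dual a, X, Y => angel a Y X
  | .star a, X, Y =>
      ⋃₀ {Z | Z ⊆ Y ∩ demon a Zᶜ Z} ∪
      ⋂₀ {Z | (X ∩ Y) ∪ (angel a Z Z ∩ demon a Z Z) ⊆ Z}
end

/-- Angel's one-argument zero-sum dGL winning region ς_α(X). -/
def dglAngel : Game V → Set (V → ℝ) → Set (V → ℝ)
  | .assign x e, X => {ω | Function.update ω x (e ω) ∈ X}
  | .ode x f Q, X => {ω | ∃ r φ, IsSolution x f Q r φ ∧ φ 0 = ω ∧ φ r ∈ X}
  | .test Q, X => Q ∩ X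
  | .choice a b, X => dglAngel a X ∪ dglAngel b X
  | .seq a b, X => dglAngel a (dglAngel b X)
  | .dual a, X => (dglAngel a Xᶜ)ᶜ
  | .star a, X => ⋂₀ {Z | X ∪ dglAngel a Z ⊆ Z}

/-- Demon's one-argument zero-sum dGL winning region δ_α(X) = (ς_α(Xᶜ))ᶜ. -/
def dglDemon (g : Game V) (X : Set (V → ℝ)) : Set (V → ℝ) :=
  (dglAngel g Xᶜ)ᶜ

/-- Systematization α^{-d}: removes all dual operators. -/
def Game.sys : Game V → Game V
  | .assign x e => .assign x e
  | .ode x f Q => .ode x f Q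
  | .test Q => .test Q
  | .choice a b => .choice a.sys b.sys
  | .seq a b => .seq a.sys b.sys
  | .dual a => a.sys
  | .star a => .star a.sys

lemma IsSolution.trunc {x : V} {f : (V → ℝ) → ℝ} {Q : Set (V → ℝ)} {r : ℝ}
    {φ : ℝ → (V → ℝ)} (h : IsSolution x f Q r φ) {s : ℝ}
    (hs : s ∈ Set.Icc (0:ℝ) r) : IsSolution x f Q s φ := by
  obtain ⟨hr, h1, h2, h3⟩ := h
  exact ⟨hs.1, fun t ht => h1 t ⟨ht.1, ht.2.trans hs.2⟩,
    fun t ht => h2 t ⟨ht.1, ht.2.trans hs.2⟩,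
    fun t ht => h3 t ⟨ht.1, ht.2.trans hs.2⟩⟩

lemma angel_demon_disjoint (α : Game V) :
    ∀ (X Y : Set (V → ℝ)), (∀ ω, ω ∈ X → ω ∈ Y → False) →
      ∀ ω, ω ∈ angel α X Y → ω ∈ demon α X Y → False := by
  induction α with
  | assign x e =>
      intro X Y h ω hA hD
      exact h _ hA hD
  | ode x f Q =>
      intro X Y h ω hA hD
      obtain ⟨r, φ, hsol, h0, hr⟩ := hA
      rcases hD with hD | ⟨r', φ', hs', h0', s, hsI, hsXY⟩
      · exact h _ hr (hD r φ hsol h0 r ⟨hsol.1, le_refl r⟩)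
      · exact h _ hsXY.1 hsXY.2
  | test Q =>
      intro X Y h ω hA hD
      rcases hD with hD | hD
      · exact hD hA.1
      · exact h _ hA.2 hD
  | choice a b iha ihb =>
      intro X Y h ω hA hD
      rcases hD with (⟨hDa, hDb⟩ | ⟨hDa, hAa⟩) | ⟨hDb, hAb⟩
      · rcases hA with hA | hA
        · exact iha X Y h ω hA hDa
        · exact ihb X Y h ω hA hDb
      · exact iha X Y h ω hAa hDa
      · exact ihb X Y h ω hAb hDb
  | seq a b iha ihb =>
      intro X Y h ω hA hD
      exact iha _ _ (ihb X Y h) ω hA hD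
  | dual a iha =>
      intro X Y h ω hA hD
      exact iha Y X (fun ω' h1 h2 => h ω' h2 h1) ω hD hA
  | star a iha =>
      intro X Y h ω hA hD
      have hI2 : ω ∈ ⋂₀ {Z | (X ∩ Y) ∪ (angel a Z Z ∩ demon a Z Z) ⊆ Z} → False := by
        intro hm
        refine hm ∅ ?_
        rintro ω' (⟨h1, h2⟩ | ⟨h1, h2⟩)
        · exact h _ h1 h2
        · exact absurd h1 (fun h1 => iha ∅ ∅ (fun _ f _ => f) ω' h1 h2)
      rcases hA with hA | hA
      · rcases hD with ⟨Z, hZ, hωZ⟩ | hD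
        · have hmem : Zᶜ ∈ {W | X ∪ angel a W Wᶜ ⊆ W} := by
            rintro ω' (h1 | h1)
            · intro hZ'
              exact h _ h1 (hZ hZ').1
            · rw [compl_compl] at h1
              intro hZ'
              exact iha Zᶜ Z (fun u h1 h2 => h1 h2) ω' h1 (hZ hZ').2
          exact hA Zᶜ hmem hωZ
        · exact hI2 hD
      · exact hI2 hA

/-- Complementary determinacy: `(ς_α(X, Xᶜ))ᶜ = δ_α(X, Xᶜ)`. -/
theorem complementary_determinacy (α : Game V) (X : Set (V → ℝ)) :
    (angel α X Xᶜ)ᶜ = demon α X Xᶜ := by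
  induction α generalizing X with
  | assign x e =>
      ext ω; simp [angel, demon]
  | ode x f Q =>
      ext ω
      constructor
      · intro hω
        left
        intro r φ hsol h0 s hs hX
        exact hω ⟨s, φ, hsol.trunc hs, h0, hX⟩
      · intro hD hA
        exact angel_demon_disjoint _ X Xᶜ (fun _ h1 h2 => h2 h1) ω hA hD
  | test Q =>
      ext ω
      simp only [angel, demon, mem_compl_iff, mem_inter_iff, mem_union]
      tauto
  | choice a b iha ihb =>
      ext ω
      simp only [angel, demon, mem_compl_iff, mem_union, mem_inter_iff,
        ← iha X, ← ihb X]
      tauto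
  | seq a b iha ihb =>
      show (angel a (angel b X Xᶜ) (demon b X Xᶜ))ᶜ = demon a (angel b X Xᶜ) (demon b X Xᶜ)
      rw [← ihb X, ← iha (angel b X Xᶜ)]
  | dual a iha =>
      show (demon a Xᶜ X)ᶜ = angel a Xᶜ X
      have h := iha Xᶜ
      rw [compl_compl] at h
      rw [← h, compl_compl]
  | star a iha =>
      have hI2 : ⋂₀ {Z | (X ∩ Xᶜ) ∪ (angel a Z Z ∩ demon a Z Z) ⊆ Z} = (∅ : Set (V → ℝ)) := by
        refine subset_antisymm (fun ω hm => ?_) (empty_subset _)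
        refine hm ∅ ?_
        rintro ω' (⟨h1, h2⟩ | ⟨h1, h2⟩)
        · exact h2 h1
        · exact absurd h1 (fun h1 => angel_demon_disjoint a ∅ ∅ (fun _ f _ => f) ω' h1 h2)
      show ((⋂₀ {Z | X ∪ angel a Z Zᶜ ⊆ Z}) ∪ _)ᶜ =
        (⋃₀ {Z | Z ⊆ Xᶜ ∩ demon a Zᶜ Z}) ∪ _
      rw [hI2, union_empty, union_empty]
      ext ω
      simp only [mem_compl_iff, mem_sInter, mem_sUnion, mem_setOf_eq, not_forall]
      constructor
      · rintro ⟨W, hW, hωW⟩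
        refine ⟨Wᶜ, ?_, hωW⟩
        refine subset_inter (compl_subset_compl.2 fun ω' h1 => hW (Or.inl h1)) ?_
        rw [compl_compl, ← iha W]
        exact compl_subset_compl.2 fun ω' h1 => hW (Or.inr h1)
      · rintro ⟨Z, hZ, hωZ⟩
        refine ⟨Zᶜ, ?_, fun h => h hωZ⟩
        rw [compl_compl]
        rintro ω' (h1 | h1)
        · exact fun hZ' => (hZ hZ').1 h1
        · intro hZ'
          have hd := (hZ hZ').2
          have h := iha Zᶜ
          rw [compl_compl] at h
          rw [← h] at hd
          exact hd h1
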